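/- Geodesic energy-to-interference ratio formula: with v_G(θ) the geodesic between v_E (top right singular vector of H_{11}) and v_L (bottom right singular vector of H_{21}), η(θ) = ‖H_{11}v_G(θ)‖² / ‖H_{21}v_G(θ)‖² equals (cos²θ · σ_{11,1}² + sin²θ · ‖H_{11}w_E‖²) / (cos²(φ_E − θ) · σ_{21,M}² + sin²(φ_E − θ) · ‖H_{21}w_L‖²), where w_E = (v_E)^⊥-component direction toward v_L and w_L = (v_L)^⊥-component direction toward v_E. -/

import Mathlib

open Matrix

noncomputable def nsq {M : ℕ} (x : Fin M → ℂ) : ℝ := ∑ i, Complex.normSq (x i)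
noncomputable def herm {M : ℕ} (a b : Fin M → ℂ) : ℂ := ∑ i, (starRingEnd ℂ) (a i) * b i

/-- The phase u_E = (v_Eᴴ v_L)/|v_Eᴴ v_L|. -/
noncomputable def uE {M : ℕ} (vE vL : Fin M → ℂ) : ℂ :=
  herm vE vL / (‖herm vE vL‖ : ℂ)

/-- The principal angle φ_E = arccos |v_Eᴴ v_L|. -/
noncomputable def phiE {M : ℕ} (vE vL : Fin M → ℂ) : ℝ :=
  Real.arccos (‖herm vE vL‖)

/-- The direction w = [v_E u_E cos φ_E − v_L](sin φ_E)⁻¹. -/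
noncomputable def wE {M : ℕ} (vE vL : Fin M → ℂ) : Fin M → ℂ :=
  ((Real.sin (phiE vE vL) : ℂ))⁻¹ •
    ((uE vE vL * (Real.cos (phiE vE vL) : ℂ)) • vE - vL)

/-- The geodesic curve v_G(θ) = v_E u_E cos θ − w sin θ. -/
noncomputable def vG {M : ℕ} (vE vL : Fin M → ℂ) (θ : ℝ) : Fin M → ℂ :=
  (uE vE vL * (Real.cos θ : ℂ)) • vE - (Real.sin θ : ℂ) • wE vE vL


/-- The direction w_L = [v_L u_Eᴴ cos φ_E − v_E](sin φ_E)⁻¹. -/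
noncomputable def wL {M : ℕ} (vE vL : Fin M → ℂ) : Fin M → ℂ :=
  ((Real.sin (phiE vE vL) : ℂ))⁻¹ •
    (((starRingEnd ℂ) (uE vE vL) * (Real.cos (phiE vE vL) : ℂ)) • vL - vE)

/-!
Because `v_E` is an eigenvector of `H₁₁ᴴ H₁₁` and `w_E ⊥ v_E`, the images `H₁₁ v_E` and `H₁₁ w_E`
are orthogonal, so `‖H₁₁ v_G(θ)‖²` splits Pythagoras-style into `cos²θ σ₁² + sin²θ ‖H₁₁ w_E‖²`.
Rewriting `v_G(θ)` as the rotation by `φ_E − θ` from `v_L` towards `w_L` (using `|u_E| = 1`), the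
same argument with `H₂₁` and its eigenvector `v_L` gives the denominator.
-/

section Sesquilinear

variable {M : ℕ}

lemma herm_eq_star_dotProduct (x y : Fin M → ℂ) : herm x y = star x ⬝ᵥ y := by
  simp [herm, dotProduct]

lemma herm_smul_left (a : ℂ) (x y : Fin M → ℂ) :
    herm (a • x) y = (starRingEnd ℂ) a * herm x y := by
  simp [herm_eq_star_dotProduct, star_smul, smul_dotProduct]

lemma herm_smul_right (a : ℂ) (x y : Fin M → ℂ) : herm x (a • y) = a * herm x y := by
  simp [herm_eq_star_dotProduct, dotProduct_smul]

lemma herm_sub_left (x y z : Fin M → ℂ) : herm (x - y) z = herm x z - herm y z := by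
  simp [herm_eq_star_dotProduct, star_sub, sub_dotProduct]

lemma herm_sub_right (x y z : Fin M → ℂ) : herm x (y - z) = herm x y - herm x z := by
  simp [herm_eq_star_dotProduct, dotProduct_sub]

lemma herm_comm (x y : Fin M → ℂ) : herm y x = (starRingEnd ℂ) (herm x y) := by
  simp [herm, map_sum, mul_comm]

lemma herm_self (x : Fin M → ℂ) : herm x x = (nsq x : ℂ) := by
  simp [herm, nsq, Complex.normSq_eq_conj_mul_self]

lemma herm_mulVec_mulVec (H : Matrix (Fin M) (Fin M) ℂ) (x y : Fin M → ℂ) :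
    herm (H *ᵥ x) (H *ᵥ y) = herm x ((Hᴴ * H) *ᵥ y) := by
  rw [herm_eq_star_dotProduct, herm_eq_star_dotProduct, star_mulVec, ← dotProduct_mulVec,
    mulVec_mulVec]

lemma nsq_smul_sub_smul_of_herm_eq_zero {x y : Fin M → ℂ} (hxy : herm x y = 0) (a b : ℂ) :
    nsq (a • x - b • y) = Complex.normSq a * nsq x + Complex.normSq b * nsq y := by
  have hyx : herm y x = 0 := by rw [herm_comm, hxy, map_zero]
  apply Complex.ofReal_injective
  rw [← herm_self]
  simp only [herm_sub_left, herm_sub_right, herm_smul_left, herm_smul_right, hxy, hyx]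
  rw [herm_self x, herm_self y]
  push_cast
  rw [Complex.normSq_eq_conj_mul_self, Complex.normSq_eq_conj_mul_self]
  ring

end Sesquilinear

section Eigenvector

variable {M : ℕ} {H : Matrix (Fin M) (Fin M) ℂ} {s : ℝ} {v : Fin M → ℂ}

lemma nsq_mulVec_of_mulVec_eq_smul (hv : (Hᴴ * H) *ᵥ v = (s : ℂ) • v) :
    nsq (H *ᵥ v) = s * nsq v := by
  apply Complex.ofReal_injective
  rw [← herm_self, herm_mulVec_mulVec, hv, herm_smul_right, herm_self, Complex.ofReal_mul]

lemma herm_mulVec_eq_zero_of_mulVec_eq_smul (hv : (Hᴴ * H) *ᵥ v = (s : ℂ) • v)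
    {w : Fin M → ℂ} (hvw : herm v w = 0) : herm (H *ᵥ v) (H *ᵥ w) = 0 := by
  rw [herm_comm, herm_mulVec_mulVec, hv, herm_smul_right, herm_comm, hvw]
  simp

lemma nsq_mulVec_smul_sub_smul_of_mulVec_eq_smul (hv : (Hᴴ * H) *ᵥ v = (s : ℂ) • v)
    (hnv : nsq v = 1) {w : Fin M → ℂ} (hvw : herm v w = 0) (a b : ℂ) :
    nsq (H *ᵥ (a • v - b • w)) = Complex.normSq a * s + Complex.normSq b * nsq (H *ᵥ w) := by
  rw [mulVec_sub, mulVec_smul, mulVec_smul,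
    nsq_smul_sub_smul_of_herm_eq_zero (herm_mulVec_eq_zero_of_mulVec_eq_smul hv hvw),
    nsq_mulVec_of_mulVec_eq_smul hv, hnv, mul_one]

end Eigenvector

section Geodesic

variable {M : ℕ} {vE vL : Fin M → ℂ}

lemma uE_mul_norm_herm (vE vL : Fin M → ℂ) : uE vE vL * ‖herm vE vL‖ = herm vE vL := by
  rcases eq_or_ne (herm vE vL) 0 with h | h
  · simp [uE, h]
  · exact div_mul_cancel₀ _ (by simpa using h)

lemma normSq_uE (h0 : herm vE vL ≠ 0) : Complex.normSq (uE vE vL) = 1 := by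
  rw [uE, Complex.normSq_div, Complex.normSq_ofReal, Complex.normSq_eq_norm_sq]
  field_simp [norm_ne_zero_iff.mpr h0]

lemma cos_phiE (h1 : ‖herm vE vL‖ ≤ 1) : Real.cos (phiE vE vL) = ‖herm vE vL‖ :=
  Real.cos_arccos (by linarith [norm_nonneg (herm vE vL)]) h1

lemma sin_phiE_pos (h1 : ‖herm vE vL‖ < 1) : 0 < Real.sin (phiE vE vL) := by
  rw [phiE, Real.sin_arccos]
  exact Real.sqrt_pos.mpr (by nlinarith [norm_nonneg (herm vE vL)])

lemma herm_eq_uE_mul_cos_phiE (h1 : ‖herm vE vL‖ ≤ 1) :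
    herm vE vL = uE vE vL * (Real.cos (phiE vE vL) : ℂ) := by
  rw [cos_phiE h1, uE_mul_norm_herm]

lemma herm_vE_wE (hE : nsq vE = 1) (h1 : ‖herm vE vL‖ ≤ 1) : herm vE (wE vE vL) = 0 := by
  rw [wE, herm_smul_right, herm_sub_right, herm_smul_right, herm_self, hE,
    ← herm_eq_uE_mul_cos_phiE h1]
  simp

lemma herm_vL_wL (hL : nsq vL = 1) (h1 : ‖herm vE vL‖ ≤ 1) : herm vL (wL vE vL) = 0 := by
  rw [wL, herm_smul_right, herm_sub_right, herm_smul_right, herm_self, hL, herm_comm,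
    herm_eq_uE_mul_cos_phiE h1, map_mul, Complex.conj_ofReal]
  simp

-- The geodesic run backwards from `v_L`, with unimodular factors `u' = 1` and `u'' = u_E`.
lemma vG_eq_cos_smul_vL_sub_smul_wL (h0 : 0 < ‖herm vE vL‖) (h1 : ‖herm vE vL‖ < 1) (θ : ℝ) :
    vG vE vL θ = (Real.cos (phiE vE vL - θ) : ℂ) • vL
      - (uE vE vL * (Real.sin (phiE vE vL - θ) : ℂ)) • wL vE vL := by
  have hu : uE vE vL * (starRingEnd ℂ) (uE vE vL) = 1 := by
    rw [Complex.mul_conj, normSq_uE (norm_pos_iff.mp h0), Complex.ofReal_one]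
  have hs : Complex.sin (phiE vE vL) ≠ 0 := by
    rw [← Complex.ofReal_sin]; exact_mod_cast (sin_phiE_pos h1).ne'
  funext i
  simp only [vG, wE, wL, Pi.smul_apply, Pi.sub_apply, smul_eq_mul]
  push_cast
  field_simp
  rw [Complex.sin_sub, Complex.cos_sub]
  linear_combination (Complex.cos θ * Complex.sin (phiE vE vL) * Complex.cos (phiE vE vL) * vL i
      - Complex.sin θ * Complex.cos (phiE vE vL) ^ 2 * vL i) * hu
    - Complex.sin θ * vL i * Complex.sin_sq_add_cos_sq (phiE vE vL : ℂ)

end Geodesic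

theorem stmt_13_general {M : ℕ} (H₁₁ H₂₁ : Matrix (Fin M) (Fin M) ℂ) (σ₁ σM : ℝ)
    (vE vL : Fin M → ℂ) (hE : nsq vE = 1) (hL : nsq vL = 1)
    (heigE : (H₁₁.conjTranspose * H₁₁).mulVec vE = (σ₁ ^ 2 : ℂ) • vE)
    (heigL : (H₂₁.conjTranspose * H₂₁).mulVec vL = (σM ^ 2 : ℂ) • vL)
    (h0 : 0 < ‖herm vE vL‖) (h1 : ‖herm vE vL‖ < 1)
    (θ : ℝ) :
    nsq (H₁₁.mulVec (vG vE vL θ)) / nsq (H₂₁.mulVec (vG vE vL θ))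
      = (Real.cos θ ^ 2 * σ₁ ^ 2 + Real.sin θ ^ 2 * nsq (H₁₁.mulVec (wE vE vL)))
        / (Real.cos (phiE vE vL - θ) ^ 2 * σM ^ 2
            + Real.sin (phiE vE vL - θ) ^ 2 * nsq (H₂₁.mulVec (wL vE vL))) := by
  rw [← Complex.ofReal_pow] at heigE heigL
  have hnum := nsq_mulVec_smul_sub_smul_of_mulVec_eq_smul heigE hE (herm_vE_wE hE h1.le)
    (uE vE vL * Real.cos θ) (Real.sin θ)
  have hden := nsq_mulVec_smul_sub_smul_of_mulVec_eq_smul heigL hL (herm_vL_wL hL h1.le)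
    (Real.cos (phiE vE vL - θ)) (uE vE vL * Real.sin (phiE vE vL - θ))
  rw [vG, hnum, ← vG, vG_eq_cos_smul_vL_sub_smul_wL h0 h1, hden]
  simp only [Complex.normSq_mul, Complex.normSq_ofReal, normSq_uE (norm_pos_iff.mp h0)]
  ring

/-- Geodesic energy-to-interference ratio formula:
η(θ) = ‖H₁₁v_G(θ)‖²/‖H₂₁v_G(θ)‖²
     = (cos²θ σ₁₁,₁² + sin²θ ‖H₁₁w_E‖²)/(cos²(φ_E−θ) σ₂₁,M² + sin²(φ_E−θ) ‖H₂₁w_L‖²). -/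
theorem stmt_13 {M : ℕ} (H₁₁ H₂₁ : Matrix (Fin M) (Fin M) ℂ) (σ₁ σM : ℝ)
    (hσ₁ : 0 ≤ σ₁) (hσM : 0 ≤ σM)
    (vE vL : Fin M → ℂ) (hE : nsq vE = 1) (hL : nsq vL = 1)
    (heigE : (H₁₁.conjTranspose * H₁₁).mulVec vE = (σ₁ ^ 2 : ℂ) • vE)
    (heigL : (H₂₁.conjTranspose * H₂₁).mulVec vL = (σM ^ 2 : ℂ) • vL)
    (h0 : 0 < ‖herm vE vL‖) (h1 : ‖herm vE vL‖ < 1)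
    (θ : ℝ) (hθ0 : 0 ≤ θ) (hθ1 : θ ≤ phiE vE vL) :
    nsq (H₁₁.mulVec (vG vE vL θ)) / nsq (H₂₁.mulVec (vG vE vL θ))
      = (Real.cos θ ^ 2 * σ₁ ^ 2 + Real.sin θ ^ 2 * nsq (H₁₁.mulVec (wE vE vL)))
        / (Real.cos (phiE vE vL - θ) ^ 2 * σM ^ 2
            + Real.sin (phiE vE vL - θ) ^ 2 * nsq (H₂₁.mulVec (wL vE vL))) :=
  stmt_13_general H₁₁ H₂₁ σ₁ σM vE vL hE hL heigE heigL h0 h1 θ
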